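/- arXiv:2501.10076 — 4 statements merged into one kernel-verified Lean document; each statement's English description precedes it below -/
import Mathlib

section
/- For all integers 2 ≤ k ≤ n and k ≤ j ≤ i ≤ n, the entries of the matrix after k−1 steps of Neville elimination of the Bessel coefficient matrix A are a^{(k)}_{ij} = (1/2^{j-1}) · (i+j-k-1)!/((i-j)!(j-k)!) · ∏_{r=1}^{k-1} (2i-r-1)/(i-k+r). -/
/-- Entries of the lower triangular Bessel coefficient matrix. -/
noncomputable def besselA (i j : ℕ) : ℝ :=
  if j ≤ i then ((i + j - 2).factorial : ℝ) / (2 ^ (j - 1) * (i - j).factorial * (j - 1).factorial)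
  else 0

/-- `besselNE k i j` is the `(i,j)` entry of `A^{(k+1)}`, the matrix obtained after `k`
steps of Neville elimination of the Bessel coefficient matrix (no row exchanges needed). -/
noncomputable def besselNE : ℕ → ℕ → ℕ → ℝ
  | 0, i, j => besselA i j
  | k + 1, i, j =>
      if k + 1 ≤ j ∧ j < i then
        besselNE k i j - besselNE k i (k + 1) / besselNE k (i - 1) (k + 1) * besselNE k (i - 1) j
      else besselNE k i j

/-!
Split the claimed entry as `besselNEFac k i j * besselNEProd k i`. Going from step `k` to `k + 1`
multiplies `besselNEProd k i` by `(2i-k-1)/(i-k)`, while in the Neville update the factor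
`besselNEProd k (i-1)` cancels from the pivot quotient `a_{ik} / a_{i-1,k}`. The update thus reduces
to an identity between factorial parts, which after clearing factorials is
`(j-k)(2i-k-1) = (i+j-k-1)(i-k) - (i-1)(i-j)`. Diagonal entries are never updated, matching the
fact that the closed form does not depend on `k` when `j = i`.
-/

open Finset

noncomputable def besselNEFac (k i j : ℕ) : ℝ :=
  1 / 2 ^ (j - 1) * ((i + j - k - 1).factorial : ℝ) / ((i - j).factorial * (j - k).factorial)

noncomputable def besselNEProd (k i : ℕ) : ℝ :=
  ∏ r ∈ Icc 1 (k - 1), ((2 * i - r - 1 : ℕ) : ℝ) / ((i - k + r : ℕ) : ℝ)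

theorem prod_Icc_one_eq_prod_range {M : Type*} [CommMonoid M] (f : ℕ → M) (n : ℕ) :
    ∏ r ∈ Icc 1 n, f r = ∏ r ∈ range n, f (r + 1) := by
  rw [range_eq_Ico, prod_Ico_add' f 0 n 1, zero_add, Ico_add_one_right_eq_Icc]

theorem besselNEProd_pos {k i : ℕ} (hki : k ≤ i) : 0 < besselNEProd k i :=
  prod_pos fun r hr => by
    rw [mem_Icc] at hr
    exact div_pos (Nat.cast_pos.mpr (by omega)) (Nat.cast_pos.mpr (by omega))

theorem besselNEProd_succ {k i : ℕ} (hk : 1 ≤ k) (hki : k < i) :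
    besselNEProd (k + 1) i
      = besselNEProd k i * (((2 * i - k - 1 : ℕ) : ℝ) / ((i - k : ℕ) : ℝ)) := by
  obtain ⟨m, rfl⟩ : ∃ m, k = m + 1 := ⟨k - 1, by omega⟩
  simp only [besselNEProd, prod_Icc_one_eq_prod_range, prod_div_distrib, add_tsub_cancel_right]
  rw [prod_range_succ, prod_range_succ' (fun r => ((i - (m + 1 + 1) + (r + 1) : ℕ) : ℝ)),
    mul_div_mul_comm]
  congr 3
  · ext r
    congr 1
    omega
  · omega

theorem besselNEFac_pos (k i j : ℕ) : 0 < besselNEFac k i j := by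
  unfold besselNEFac; positivity

theorem besselA_eq_besselNEFac {i j : ℕ} (hji : j ≤ i) : besselA i j = besselNEFac 1 i j := by
  rw [besselA, if_pos hji, besselNEFac, show i + j - 1 - 1 = i + j - 2 by omega]
  field_simp

theorem besselNEFac_diag {k i : ℕ} (hki : k < i) :
    besselNEFac k i i
      = besselNEFac (k + 1) i i * (((2 * i - k - 1 : ℕ) : ℝ) / ((i - k : ℕ) : ℝ)) := by
  obtain ⟨c, rfl⟩ : ∃ c, i = k + 1 + c := ⟨i - (k + 1), by omega⟩
  simp only [besselNEFac, Nat.sub_self]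
  rw [show k + 1 + c + (k + 1 + c) - k - 1 = k + 2 * c + 1 by omega,
    show k + 1 + c + (k + 1 + c) - (k + 1) - 1 = k + 2 * c by omega,
    show k + 1 + c - k = c + 1 by omega, show k + 1 + c - (k + 1) = c by omega,
    show 2 * (k + 1 + c) - k - 1 = k + 2 * c + 1 by omega]
  simp only [Nat.factorial_succ]
  push_cast
  field_simp

theorem besselNEFac_pivot_div {k i : ℕ} (hk : 1 ≤ k) (hki : k < i) :
    besselNEFac k i k / besselNEFac k (i - 1) k = ((i - 1 : ℕ) : ℝ) / ((i - k : ℕ) : ℝ) := by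
  obtain ⟨c, rfl⟩ : ∃ c, i = k + 1 + c := ⟨i - (k + 1), by omega⟩
  obtain ⟨m, rfl⟩ : ∃ m, k = m + 1 := ⟨k - 1, by omega⟩
  simp only [besselNEFac, Nat.sub_self]
  rw [show m + 1 + 1 + c + (m + 1) - (m + 1) - 1 = m + c + 1 by omega,
    show m + 1 + 1 + c - 1 + (m + 1) - (m + 1) - 1 = m + c by omega,
    show m + 1 + 1 + c - (m + 1) = c + 1 by omega, show m + 1 + 1 + c - 1 - (m + 1) = c by omega,
    show m + 1 + 1 + c - 1 = m + c + 1 by omega]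
  simp only [Nat.factorial_succ]
  push_cast
  field_simp

theorem besselNEFac_succ {k i j : ℕ} (hkj : k < j) (hji : j < i) :
    besselNEFac (k + 1) i j * (((2 * i - k - 1 : ℕ) : ℝ) / ((i - k : ℕ) : ℝ))
      = besselNEFac k i j - ((i - 1 : ℕ) : ℝ) / ((i - k : ℕ) : ℝ) * besselNEFac k (i - 1) j := by
  obtain ⟨b, rfl⟩ : ∃ b, j = k + 1 + b := ⟨j - (k + 1), by omega⟩
  obtain ⟨c, rfl⟩ : ∃ c, i = k + 2 + b + c := ⟨i - (k + 2 + b), by omega⟩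
  simp only [besselNEFac]
  rw [show k + 2 + b + c + (k + 1 + b) - (k + 1) - 1 = k + 2 * b + c + 1 by omega,
    show k + 2 + b + c + (k + 1 + b) - k - 1 = k + 2 * b + c + 2 by omega,
    show k + 2 + b + c - 1 + (k + 1 + b) - k - 1 = k + 2 * b + c + 1 by omega,
    show k + 2 + b + c - (k + 1 + b) = c + 1 by omega,
    show k + 2 + b + c - 1 - (k + 1 + b) = c by omega,
    show k + 1 + b - (k + 1) = b by omega, show k + 1 + b - k = b + 1 by omega,
    show 2 * (k + 2 + b + c) - k - 1 = k + 2 * b + 2 * c + 3 by omega,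
    show k + 2 + b + c - k = b + c + 2 by omega, show k + 2 + b + c - 1 = k + b + c + 1 by omega]
  simp only [Nat.factorial_succ]
  push_cast
  field_simp
  ring

theorem besselNEFac_mul_besselNEProd_succ {k i j : ℕ} (hk : 1 ≤ k) (hkj : k < j) (hji : j < i) :
    besselNEFac (k + 1) i j * besselNEProd (k + 1) i
      = besselNEFac k i j * besselNEProd k i
        - besselNEFac k i k * besselNEProd k i / (besselNEFac k (i - 1) k * besselNEProd k (i - 1))
          * (besselNEFac k (i - 1) j * besselNEProd k (i - 1)) := by
  have hP := (besselNEProd_pos (k := k) (i := i - 1) (by omega)).ne'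
  have hF := (besselNEFac_pos k (i - 1) k).ne'
  have hpivot :
      besselNEFac k i k * besselNEProd k i / (besselNEFac k (i - 1) k * besselNEProd k (i - 1))
          * (besselNEFac k (i - 1) j * besselNEProd k (i - 1))
        = besselNEFac k i k / besselNEFac k (i - 1) k * besselNEFac k (i - 1) j
          * besselNEProd k i := by
    field_simp
  rw [hpivot, besselNEFac_pivot_div hk (by omega), besselNEProd_succ hk (by omega)]
  linear_combination besselNEProd k i * besselNEFac_succ hkj hji

theorem besselNE_eq_besselNEFac_mul_besselNEProd (m : ℕ) {i j : ℕ} (hj : m + 1 ≤ j)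
    (hji : j ≤ i) : besselNE m i j = besselNEFac (m + 1) i j * besselNEProd (m + 1) i := by
  induction m generalizing i j with
  | zero => simp [besselNE, besselA_eq_besselNEFac hji, besselNEProd]
  | succ m ih =>
    rcases hji.eq_or_lt with rfl | hji
    · rw [besselNE, if_neg (by omega), ih (by omega) le_rfl,
        besselNEFac_diag (k := m + 1) (by omega), besselNEProd_succ (k := m + 1) (by omega) (by omega)]
      ring
    · rw [besselNE, if_pos ⟨by omega, hji⟩, ih (by omega) hji.le, ih le_rfl (by omega),
        ih le_rfl (by omega), ih (by omega) (by omega)]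
      exact (besselNEFac_mul_besselNEProd_succ (by omega) hj hji).symm

theorem bessel_NE_entries_general (k i j : ℕ) (hk : 2 ≤ k) (hkj : k ≤ j) (hji : j ≤ i) :
    besselNE (k - 1) i j
      = (1 / 2 ^ (j - 1)) * ((i + j - k - 1).factorial : ℝ)
          / ((i - j).factorial * (j - k).factorial)
        * ∏ r ∈ Finset.Icc 1 (k - 1), ((2 * i - r - 1 : ℕ) : ℝ) / ((i - k + r : ℕ) : ℝ) := by
  obtain ⟨m, rfl⟩ : ∃ m, k = m + 1 := ⟨k - 1, by omega⟩
  exact besselNE_eq_besselNEFac_mul_besselNEProd m hkj hji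

theorem bessel_NE_entries (n k i j : ℕ) (hk : 2 ≤ k) (hkj : k ≤ j) (hji : j ≤ i) (hin : i ≤ n) :
    besselNE (k - 1) i j
      = (1 / 2 ^ (j - 1)) * ((i + j - k - 1).factorial : ℝ)
          / ((i - j).factorial * (j - k).factorial)
        * ∏ r ∈ Finset.Icc 1 (k - 1), ((2 * i - r - 1 : ℕ) : ℝ) / ((i - k + r : ℕ) : ℝ) :=
  bessel_NE_entries_general k i j hk hkj hji
end

section
/- The pivots of the Neville elimination of the Bessel coefficient matrix A are p_{ij} = (1/2^{j-1}) · (i-1)!/(i-j)! · ∏_{r=1}^{j-1} (2i-r-1)/(i-j+r) for 1 ≤ j ≤ i ≤ n, and in particular all pivots are positive. -/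
/-!
Writing `j = k + a + 1` and `i = j + b`, the entries below the diagonal after `k` elimination
steps are `(2k+2a+2b)! (k+2a+b)! (a+b)! / (2^(k+a) b! (k+2a+2b)! a! (k+a+b)!)`: by induction
on `k`, one elimination step is an identity between ratios of factorials. At the pivot column
(`a = 0`) this collapses to `(2i-2)! / (2^(j-1) (2i-j-1)!)`, and the product in the statement
telescopes to the same ratio of factorials.
-/

open Nat Finset

noncomputable def besselNEFormula (k a b : ℕ) : ℝ :=
  (2 * k + 2 * a + 2 * b)! * (k + 2 * a + b)! * (a + b)! /
    (2 ^ (k + a) * b ! * (k + 2 * a + 2 * b)! * a ! * (k + a + b)!)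

theorem besselNEFormula_diag_succ (k a : ℕ) :
    besselNEFormula k (a + 1) 0 = besselNEFormula (k + 1) a 0 := by
  simp only [besselNEFormula, Nat.mul_succ, Nat.add_succ, Nat.succ_add, Nat.factorial_succ,
    Nat.mul_zero, Nat.add_zero, Nat.factorial_zero]
  push_cast
  field_simp

theorem besselNEFormula_neville_step (k a b : ℕ) :
    besselNEFormula k (a + 1) (b + 1) - besselNEFormula k 0 (a + b + 2) /
      besselNEFormula k 0 (a + b + 1) * besselNEFormula k (a + 1) b =
      besselNEFormula (k + 1) a (b + 1) := by
  simp only [besselNEFormula, Nat.mul_succ, Nat.add_succ, Nat.succ_add, Nat.factorial_succ,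
    Nat.mul_zero, Nat.add_zero, Nat.factorial_zero, Nat.mul_add, ← Nat.add_assoc]
  push_cast
  field_simp
  ring

theorem besselNE_eq_formula {k a b i j : ℕ} (hj : j = k + a + 1) (hi : i = j + b) :
    besselNE k i j = besselNEFormula k a b := by
  induction k generalizing a b i j with
  | zero =>
    subst hi hj
    rw [besselNE, besselA, if_pos (by omega), besselNEFormula,
      show 0 + a + 1 + b + (0 + a + 1) - 2 = 2 * a + b by omega,
      show 0 + a + 1 + b - (0 + a + 1) = b by omega, show 0 + a + 1 - 1 = a by omega]
    field_simp
    ring_nf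
  | succ k ih =>
    rw [besselNE]
    rcases b with _ | b
    · rw [if_neg (by omega), ih (a := a + 1) (b := 0) (by omega) (by omega),
        besselNEFormula_diag_succ]
    · rw [if_pos (by omega), ih (a := a + 1) (b := b + 1) (by omega) (by omega),
        ih (a := 0) (b := a + b + 2) (by omega) (by omega),
        ih (a := 0) (b := a + b + 1) (by omega) (by omega),
        ih (a := a + 1) (b := b) (by omega) (by omega), besselNEFormula_neville_step]

theorem besselNEFormula_pivot (k b : ℕ) :
    besselNEFormula k 0 b = (2 * k + 2 * b).descFactorial k / 2 ^ k := by
  simp only [besselNEFormula, Nat.mul_zero, Nat.add_zero, Nat.zero_add, factorial_zero]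
  rw [← factorial_mul_descFactorial (show k ≤ 2 * k + 2 * b by omega),
    show 2 * k + 2 * b - k = k + 2 * b by omega]
  push_cast
  field_simp

theorem besselNE_pivot {i j : ℕ} (hj : 1 ≤ j) (hji : j ≤ i) :
    besselNE (j - 1) i j = (2 * i - 2).descFactorial (j - 1) / 2 ^ (j - 1) := by
  rw [besselNE_eq_formula (a := 0) (b := i - j) (by omega) (by omega), besselNEFormula_pivot,
    show 2 * (j - 1) + 2 * (i - j) = 2 * i - 2 by omega]

theorem prod_Icc_sub_div_add {K : Type*} [Field K] (M b k : ℕ) :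
    ∏ r ∈ Icc 1 k, ((M - r - 1 : ℕ) : K) / ((b + r : ℕ) : K) =
      (M - 2).descFactorial k / (b + 1).ascFactorial k := by
  induction k with
  | zero => simp
  | succ k ih =>
    rw [prod_Icc_succ_top (by omega), ih, descFactorial_succ, ascFactorial_succ,
      show M - (k + 1) - 1 = M - 2 - k by omega, show b + (k + 1) = b + 1 + k by omega]
    simp only [Nat.cast_mul]
    ring

theorem bessel_NE_pivots_general (i j : ℕ) (hj : 1 ≤ j) (hji : j ≤ i) :
    besselNE (j - 1) i j
        = (1 / 2 ^ (j - 1)) * ((i - 1).factorial : ℝ) / ((i - j).factorial : ℝ)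
          * ∏ r ∈ Finset.Icc 1 (j - 1), ((2 * i - r - 1 : ℕ) : ℝ) / ((i - j + r : ℕ) : ℝ)
      ∧ 0 < besselNE (j - 1) i j := by
  have hfac : (i - j)! * (i - j + 1).ascFactorial (j - 1) = (i - 1)! := by
    rw [factorial_mul_ascFactorial]
    congr 1
    omega
  have hpos : 0 < (2 * i - 2).descFactorial (j - 1) := descFactorial_pos.2 (by omega)
  rw [besselNE_pivot hj hji, prod_Icc_sub_div_add]
  refine ⟨?_, by positivity⟩
  rw [← hfac]
  push_cast
  field_simp

theorem bessel_NE_pivots (n i j : ℕ) (hj : 1 ≤ j) (hji : j ≤ i) (hin : i ≤ n) :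
    besselNE (j - 1) i j
        = (1 / 2 ^ (j - 1)) * ((i - 1).factorial : ℝ) / ((i - j).factorial : ℝ)
          * ∏ r ∈ Finset.Icc 1 (j - 1), ((2 * i - r - 1 : ℕ) : ℝ) / ((i - j + r : ℕ) : ℝ)
      ∧ 0 < besselNE (j - 1) i j :=
  bessel_NE_pivots_general i j hj hji
end

section
/- The lower triangular matrix A with entries a_{ij} = (i+j-2)!/(2^{j-1}(i-j)!(j-1)!) for i ≥ j (and 0 for i < j) is a nonsingular totally positive matrix: all its minors are nonnegative and its determinant is positive. -/
/-!
Since `besselA (i+1) (j+1) = C(i+j, 2j) · (2j)! / (2^j j!)`, the matrix is the unitriangular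
matrix `J = (C(i+j, 2j))` times a positive diagonal matrix, so it suffices that `J` is totally
positive. Adding to a row `p` the row `q` just above it preserves total positivity: a new minor is
an old one plus the minor with row `p` replaced by `q`, which is again a minor (as no chosen row
lies strictly between `q` and `p`) or has two equal rows. Hence taking prefix sums of the rows
preserves it too. By the hockey-stick identity, prefix sums take `(C(i+j, 2j))` to
`(C(i+j+1, 2j+1))`, and take `diag(1, (C(i+j+1, 2j+1))ₙₓₙ)` to the `(n+1)×(n+1)` matrix
`(C(i+j, 2j))`, which gives an induction on `n`.
-/

open Matrix Finset Nat

theorem StrictMono.update_of_covBy {α β : Type*} [LinearOrder α] [LinearOrder β] {f : α → β}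
    (hf : StrictMono f) {a : α} {b : β} (hb : b ⋖ f a) (hbf : ∀ x, f x ≠ b) :
    StrictMono (Function.update f a b) := by
  intro x y hxy
  by_cases hx : x = a <;> by_cases hy : y = a
  · exact absurd (hx.trans hy.symm) hxy.ne
  · subst hx
    simpa [hy] using hb.lt.trans (hf hxy)
  · subst hy
    simpa [hx] using (hb.le_of_lt (hf hxy)).lt_of_ne (hbf x)
  · simpa [hx, hy] using hf hxy

theorem StrictMono.exists_eq_succ_comp {k m : ℕ} {r : Fin k → Fin (m + 1)} (hr : StrictMono r)
    (h0 : ∀ i, r i ≠ 0) : ∃ r' : Fin k → Fin m, StrictMono r' ∧ r = Fin.succ ∘ r' :=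
  ⟨fun i => (r i).pred (h0 i), Fin.strictMono_pred_comp h0 hr, by ext i; simp⟩

theorem Nat.sum_range_add_choose_of_le {b k : ℕ} (hbk : b ≤ k) (i : ℕ) :
    ∑ s ∈ range i, (s + b).choose k = (i + b).choose (k + 1) := by
  induction i with
  | zero => simp [choose_eq_zero_of_lt (show b < k + 1 by omega)]
  | succ i ih => rw [sum_range_succ, ih, add_right_comm, choose_succ_succ', add_comm]

theorem Fin.sum_Iic_val_eq_sum_range {M : Type*} [AddCommMonoid M] {n : ℕ} (f : ℕ → M)
    (i : Fin n) :
    ∑ s ∈ Iic i, f s = ∑ s ∈ range (i + 1), f s := by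
  rw [Nat.range_succ_eq_Iic, ← Fin.map_valEmbedding_Iic, sum_map]
  rfl

namespace Matrix

section TotallyPositive

variable {R : Type*} [CommRing R] [PartialOrder R] [IsOrderedRing R]
  {m n : Type*} [LinearOrder m] [LinearOrder n]

/-- Following the paper, "totally positive" means that every minor is nonnegative. -/
def IsTotallyPositive (M : Matrix m n R) : Prop :=
  ∀ (k : ℕ) (r : Fin k → m) (c : Fin k → n), StrictMono r → StrictMono c →
    0 ≤ (M.submatrix r c).det

namespace IsTotallyPositive

theorem of_isEmpty [IsEmpty m] (M : Matrix m n R) : M.IsTotallyPositive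
  | 0, _, _, _, _ => by simp
  | _ + 1, r, _, _, _ => isEmptyElim (r 0)

theorem updateRow_add_of_covBy {M : Matrix m n R} (hM : M.IsTotallyPositive) {p q : m}
    (hqp : q ⋖ p) : (M.updateRow p (M p + M q)).IsTotallyPositive := by
  intro k r c hr hc
  by_cases hp : ∃ i, r i = p
  · obtain ⟨i₀, rfl⟩ := hp
    have hsplit : (M.updateRow (r i₀) (M (r i₀) + M q)).submatrix r c
        = (M.submatrix r c).updateRow i₀ ((M.submatrix r c) i₀ + fun j => M q (c j)) := by
      ext i j
      rcases eq_or_ne i i₀ with rfl | hi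
      · simp
      · simp [hi, hr.injective.ne hi]
    have hq_row : (M.submatrix r c).updateRow i₀ (fun j => M q (c j))
        = M.submatrix (Function.update r i₀ q) c := by
      ext i j
      rcases eq_or_ne i i₀ with rfl | hi
      · simp
      · simp [hi]
    rw [hsplit, det_updateRow_add, updateRow_eq_self, hq_row]
    refine add_nonneg (hM k r c hr hc) ?_
    by_cases hq : ∃ i, r i = q
    · obtain ⟨i₁, hi₁⟩ := hq
      have hne : i₀ ≠ i₁ := by rintro rfl; exact hqp.ne' hi₁
      rw [det_zero_of_row_eq hne (by ext j; simp [hne.symm, hi₁])]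
    · push Not at hq
      exact hM k _ c (hr.update_of_covBy hqp hq) hc
  · push Not at hp
    convert hM k r c hr hc using 2
    ext i j
    simp [hp i]

theorem mul_diagonal [Fintype n] {M : Matrix m n R} (hM : M.IsTotallyPositive) {d : n → R}
    (hd : ∀ j, 0 ≤ d j) : (M * diagonal d).IsTotallyPositive := by
  intro k r c hr hc
  have : (M * diagonal d).submatrix r c = of fun i j => d (c j) * M.submatrix r c i j := by
    ext i j
    simp [Matrix.mul_diagonal, mul_comm]
  rw [this, det_mul_row]
  exact mul_nonneg (prod_nonneg fun j _ => hd (c j)) (hM k r c hr hc)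

end IsTotallyPositive

end TotallyPositive

section PrefixSums

variable {α : Type*} [AddCommMonoid α] {n : Type*} {m : ℕ}

def rowPrefixSums (M : Matrix (Fin m) n α) : Matrix (Fin m) n α :=
  of fun i j => ∑ s ∈ Iic i, M s j

def rowPartialPrefixSums (M : Matrix (Fin m) n α) (t : ℕ) : Matrix (Fin m) n α :=
  of fun i j => if (i : ℕ) ≤ t then ∑ s ∈ Iic i, M s j else M i j

theorem rowPartialPrefixSums_zero (M : Matrix (Fin m) n α) :
    rowPartialPrefixSums M 0 = M := by
  ext i j
  by_cases hi : (i : ℕ) = 0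
  · have : Iic i = {i} := by
      ext s
      simp only [mem_Iic, mem_singleton, Fin.le_def, Fin.ext_iff]
      omega
    simp [rowPartialPrefixSums, hi, this]
  · simp [rowPartialPrefixSums, hi]

theorem rowPartialPrefixSums_succ (M : Matrix (Fin m) n α) {t : ℕ} (ht : t + 1 < m) :
    rowPartialPrefixSums M (t + 1) = (rowPartialPrefixSums M t).updateRow ⟨t + 1, ht⟩
      (rowPartialPrefixSums M t ⟨t + 1, ht⟩ + rowPartialPrefixSums M t ⟨t, by omega⟩) := by
  ext i j
  rcases eq_or_ne i ⟨t + 1, ht⟩ with rfl | hi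
  · have : Iic (⟨t + 1, ht⟩ : Fin m) = insert ⟨t + 1, ht⟩ (Iic ⟨t, by omega⟩) := by
      ext s
      simp only [mem_Iic, mem_insert, Fin.le_def, Fin.ext_iff]
      omega
    simp [rowPartialPrefixSums, this]
  · have : (i : ℕ) ≠ t + 1 := fun h => hi (Fin.ext h)
    simp only [rowPartialPrefixSums, updateRow_ne hi, of_apply,
      show (i : ℕ) ≤ t + 1 ↔ (i : ℕ) ≤ t by omega]

theorem rowPartialPrefixSums_of_le (M : Matrix (Fin m) n α) {t : ℕ} (ht : m ≤ t + 1) :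
    rowPartialPrefixSums M t = rowPrefixSums M := by
  ext i j
  simp [rowPartialPrefixSums, rowPrefixSums, show (i : ℕ) ≤ t by omega]

variable {R : Type*} [CommRing R] [PartialOrder R] [IsOrderedRing R] [LinearOrder n]

theorem IsTotallyPositive.rowPartialPrefixSums {M : Matrix (Fin m) n R}
    (hM : M.IsTotallyPositive) (t : ℕ) : (M.rowPartialPrefixSums t).IsTotallyPositive := by
  induction t with
  | zero => rwa [rowPartialPrefixSums_zero]
  | succ t ih =>
    by_cases ht : t + 1 < m
    · rw [rowPartialPrefixSums_succ M ht]
      exact ih.updateRow_add_of_covBy (by simp)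
    · rwa [rowPartialPrefixSums_of_le M (by omega : m ≤ t + 1 + 1),
        ← rowPartialPrefixSums_of_le M (by omega : m ≤ t + 1)]

theorem IsTotallyPositive.rowPrefixSums {M : Matrix (Fin m) n R}
    (hM : M.IsTotallyPositive) : M.rowPrefixSums.IsTotallyPositive := by
  rw [← rowPartialPrefixSums_of_le M le_self_add]
  exact hM.rowPartialPrefixSums m

end PrefixSums

section BlockDiagOne

variable {α : Type*} [Zero α] [One α] {m n : ℕ}

def blockDiagOne (M : Matrix (Fin m) (Fin n) α) : Matrix (Fin (m + 1)) (Fin (n + 1)) α :=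
  of (Fin.cons (Fin.cons 1 0) fun i => Fin.cons 0 (M i))

theorem blockDiagOne_zero_zero (M : Matrix (Fin m) (Fin n) α) : blockDiagOne M 0 0 = 1 := rfl

theorem blockDiagOne_zero_of_ne (M : Matrix (Fin m) (Fin n) α) {j : Fin (n + 1)} (hj : j ≠ 0) :
    blockDiagOne M 0 j = 0 := by
  obtain ⟨j, rfl⟩ := Fin.exists_succ_eq.2 hj
  rfl

theorem blockDiagOne_of_ne_zero (M : Matrix (Fin m) (Fin n) α) {i : Fin (m + 1)} (hi : i ≠ 0) :
    blockDiagOne M i 0 = 0 := by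
  obtain ⟨i, rfl⟩ := Fin.exists_succ_eq.2 hi
  rfl

variable {R : Type*} [CommRing R] [PartialOrder R] [IsOrderedRing R]

theorem IsTotallyPositive.blockDiagOne {M : Matrix (Fin m) (Fin n) R}
    (hM : M.IsTotallyPositive) : M.blockDiagOne.IsTotallyPositive := by
  have minor_of_ne_zero : ∀ k (r : Fin k → Fin (m + 1)) (c : Fin k → Fin (n + 1)),
      StrictMono r → StrictMono c → (∀ i, r i ≠ 0) → (∀ j, c j ≠ 0) →
        0 ≤ (M.blockDiagOne.submatrix r c).det := by
    intro k r c hr hc hr0 hc0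
    obtain ⟨r', hr', rfl⟩ := hr.exists_eq_succ_comp hr0
    obtain ⟨c', hc', rfl⟩ := hc.exists_eq_succ_comp hc0
    exact hM k r' c' hr' hc'
  rintro (_ | k) r c hr hc
  · simp
  have ne_zero {p : ℕ} {f : Fin (k + 1) → Fin (p + 1)} (hf : StrictMono f) {i : Fin (k + 1)}
      (hi : i ≠ 0) : f i ≠ 0 :=
    ((Fin.zero_le _).trans_lt (hf (Fin.pos_iff_ne_zero.2 hi))).ne'
  have avoids_zero {p : ℕ} {f : Fin (k + 1) → Fin (p + 1)} (hf : StrictMono f) (h0 : f 0 ≠ 0)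
      (i : Fin (k + 1)) : f i ≠ 0 := by
    rcases eq_or_ne i 0 with rfl | hi
    exacts [h0, ne_zero hf hi]
  by_cases hr0 : r 0 = 0 <;> by_cases hc0 : c 0 = 0
  · rw [det_succ_column_zero, Fin.sum_univ_succ, Finset.sum_eq_zero fun i _ => ?_]
    · simp only [submatrix_apply, hr0, hc0, blockDiagOne_zero_zero, Fin.val_zero, pow_zero,
        one_mul, add_zero, Fin.succAbove_zero, submatrix_submatrix]
      exact minor_of_ne_zero k _ _ (hr.comp Fin.strictMono_succ) (hc.comp Fin.strictMono_succ)
        (fun i => ne_zero hr (Fin.succ_ne_zero i)) (fun j => ne_zero hc (Fin.succ_ne_zero j))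
    · simp [hc0, blockDiagOne_of_ne_zero _ (ne_zero hr (Fin.succ_ne_zero i))]
  · refine (det_eq_zero_of_row_eq_zero 0 fun j => ?_).ge
    simp [hr0, blockDiagOne_zero_of_ne _ (avoids_zero hc hc0 j)]
  · refine (det_eq_zero_of_column_eq_zero 0 fun i => ?_).ge
    simp [hc0, blockDiagOne_of_ne_zero _ (avoids_zero hr hr0 i)]
  · exact minor_of_ne_zero _ r c hr hc (avoids_zero hr hr0) (avoids_zero hc hc0)

end BlockDiagOne

end Matrix

section ChooseMatrix

variable (R : Type*) [CommRing R]

def chooseMatrix (a n : ℕ) : Matrix (Fin n) (Fin n) R :=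
  of fun i j => ((i + j + a : ℕ).choose (2 * j + a) : R)

theorem det_chooseMatrix (a n : ℕ) : (chooseMatrix R a n).det = 1 := by
  rw [det_of_isLowerTriangular]
  · refine prod_eq_one fun i _ => ?_
    simp [chooseMatrix, ← two_mul]
  · intro i j hij
    have : (i : ℕ) + j + a < 2 * j + a := by
      have := Fin.lt_def.1 (OrderDual.toDual_lt_toDual.1 hij)
      omega
    simp [chooseMatrix, choose_eq_zero_of_lt this]

theorem rowPrefixSums_chooseMatrix (a n : ℕ) :
    (chooseMatrix R a n).rowPrefixSums = chooseMatrix R (a + 1) n := by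
  ext i j
  simp only [rowPrefixSums, chooseMatrix, of_apply]
  rw [Fin.sum_Iic_val_eq_sum_range (fun s => ((s + j + a : ℕ).choose (2 * j + a) : R)),
    ← Nat.cast_sum]
  simp_rw [add_assoc _ (j : ℕ) a]
  rw [Nat.sum_range_add_choose_of_le (by omega)]
  congr 2
  ring

theorem rowPrefixSums_blockDiagOne_chooseMatrix (n : ℕ) :
    (chooseMatrix R 1 n).blockDiagOne.rowPrefixSums = chooseMatrix R 0 (n + 1) := by
  ext i j
  simp only [rowPrefixSums, of_apply]
  induction j using Fin.cases with
  | zero =>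
    rw [sum_eq_single 0 (fun s _ hs => blockDiagOne_of_ne_zero _ hs) (by simp)]
    simp [chooseMatrix, blockDiagOne_zero_zero]
  | succ j =>
    have hcol : ∀ s : Fin (n + 1), (chooseMatrix R 1 n).blockDiagOne s j.succ
        = ((s + j : ℕ).choose (2 * j + 1) : R) := by
      intro s
      induction s using Fin.cases with
      | zero =>
        simp [blockDiagOne_zero_of_ne, choose_eq_zero_of_lt (show (j : ℕ) < 2 * j + 1 by omega)]
      | succ s =>
        show ((s + j + 1 : ℕ).choose (2 * j + 1) : R) = ((s + 1 + j : ℕ).choose (2 * j + 1) : R)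
        rw [add_right_comm]
    simp_rw [hcol]
    rw [Fin.sum_Iic_val_eq_sum_range (fun s => ((s + j : ℕ).choose (2 * j + 1) : R)),
      ← Nat.cast_sum, Nat.sum_range_add_choose_of_le (by omega)]
    simp only [chooseMatrix, of_apply, Fin.val_succ]
    congr 2
    ring

variable [PartialOrder R] [IsOrderedRing R]

theorem isTotallyPositive_chooseMatrix_zero (n : ℕ) : (chooseMatrix R 0 n).IsTotallyPositive := by
  induction n with
  | zero => exact .of_isEmpty _
  | succ n ih =>
    have h₁ : (chooseMatrix R 1 n).IsTotallyPositive := by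
      rw [← rowPrefixSums_chooseMatrix]
      exact ih.rowPrefixSums
    rw [← rowPrefixSums_blockDiagOne_chooseMatrix]
    exact h₁.blockDiagOne.rowPrefixSums

end ChooseMatrix

theorem besselA_succ_succ (i j : ℕ) :
    besselA (i + 1) (j + 1) = (i + j).choose (2 * j) * ((2 * j)! / (2 ^ j * j ! : ℝ)) := by
  unfold besselA
  by_cases h : j ≤ i
  · rw [if_pos (by omega), show i + 1 + (j + 1) - 2 = i + j by omega,
      show i + 1 - (j + 1) = i - j by omega, add_tsub_cancel_right,
      Nat.cast_choose ℝ (by omega : 2 * j ≤ i + j), show i + j - 2 * j = i - j by omega]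
    field_simp
  · rw [if_neg (by omega), choose_eq_zero_of_lt (by omega : i + j < 2 * j)]
    simp

theorem besselA_TP_nonsingular (n : ℕ) :
    let A : Matrix (Fin n) (Fin n) ℝ := fun i j => besselA (i + 1) (j + 1)
    (∀ (k : ℕ) (r c : Fin k → Fin n), StrictMono r → StrictMono c →
        0 ≤ (A.submatrix r c).det) ∧ 0 < A.det := by
  intro A
  have hA : A = chooseMatrix ℝ 0 n *
      diagonal fun j : Fin n => (2 * j : ℕ)! / (2 ^ (j : ℕ) * (j : ℕ)! : ℝ) := by
    ext i j
    simp [A, Matrix.mul_diagonal, besselA_succ_succ, chooseMatrix]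
  rw [hA]
  refine ⟨(isTotallyPositive_chooseMatrix_zero ℝ n).mul_diagonal fun j => by positivity, ?_⟩
  rw [det_mul, det_chooseMatrix, det_diagonal, one_mul]
  exact prod_pos fun j _ => by positivity
end

section
/- The product of a strictly totally positive n×n matrix and a nonsingular totally positive n×n matrix is strictly totally positive. -/
/-!
By Cauchy–Binet, every minor `det (AB)[r, c]` is the sum over strictly increasing `s` of
`det A[r, s] * det B[s, c]`. All terms are nonnegative, and one of them is positive: since `B`
is invertible, its columns `c` are independent, so some `det B[s, c]` is nonzero.
-/

open Finset Matrix

theorem Tuple.sort_strictMono_comp_perm {k : ℕ} {ι : Type*} [LinearOrder ι] {g : Fin k → ι}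
    (hg : StrictMono g) (σ : Equiv.Perm (Fin k)) : Tuple.sort (g ∘ σ) = σ⁻¹ := by
  refine (Tuple.eq_sort_iff.2 ⟨?_, fun i j hij hgij => ?_⟩).symm
  · simpa [Function.comp_def] using hg.monotone
  · exact absurd (hg.injective (by simpa using hgij)) hij.ne

theorem Finset.sum_injective_eq_sum_strictMono_sum_perm {k : ℕ} {ι β : Type*} [LinearOrder ι]
    [Fintype ι] [AddCommMonoid β] (F : (Fin k → ι) → β) :
    ∑ f : Fin k → ι with Function.Injective f, F f =
      ∑ g : Fin k → ι with StrictMono g, ∑ σ : Equiv.Perm (Fin k), F (g ∘ σ) := by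
  rw [← sum_product']
  refine sum_nbij' (fun f => (f ∘ Tuple.sort f, (Tuple.sort f)⁻¹)) (fun p => p.1 ∘ p.2)
    ?_ ?_ ?_ ?_ ?_
  · simp only [mem_filter, mem_product, mem_univ, true_and, and_true]
    exact fun f hf => (Tuple.monotone_sort f).strictMono_of_injective
      (hf.comp (Tuple.sort f).injective)
  · simp only [mem_filter, mem_product, mem_univ, true_and, and_true]
    exact fun p hp => hp.injective.comp p.2.injective
  · intro f _
    ext
    simp
  · simp only [mem_product, mem_filter, mem_univ, true_and, and_true]
    intro p hp
    ext <;> simp [Tuple.sort_strictMono_comp_perm hp]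
  · intro f _
    simp [Function.comp_def]

section CauchyBinet

variable {R : Type*} [CommRing R]

theorem Matrix.det_mul_eq_sum_prod_mul_det_submatrix {m n : Type*} [Fintype m] [DecidableEq m]
    [Fintype n] [DecidableEq n] (M : Matrix m n R) (N : Matrix n m R) :
    (M * N).det = ∑ f : m → n, (∏ i, M i (f i)) * (N.submatrix f id).det := by
  have hrows : M * N = of fun i => ∑ l, M i l • N l := by
    ext i j
    simp [mul_apply, Finset.sum_apply]
  have hexpand := detRowAlternating.toMultilinearMap.map_sum fun i l => M i l • N l
  rw [hrows, det, ← AlternatingMap.coe_multilinearMap]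
  refine hexpand.trans (sum_congr rfl fun f _ => ?_)
  exact detRowAlternating.toMultilinearMap.map_smul_univ (fun i => M i (f i)) (fun i => N (f i))

variable {ι : Type*} [LinearOrder ι] [Fintype ι] {k : ℕ}

theorem Matrix.det_mul_eq_sum_strictMono (M : Matrix (Fin k) ι R) (N : Matrix ι (Fin k) R) :
    (M * N).det =
      ∑ g : Fin k → ι with StrictMono g, (M.submatrix id g).det * (N.submatrix g id).det := by
  have hinjective : ∀ f ∈ (univ : Finset (Fin k → ι)),
      (∏ i, M i (f i)) * (N.submatrix f id).det ≠ 0 → Function.Injective f := by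
    intro f _ hf
    by_contra hnot
    obtain ⟨a, b, hab, hne⟩ := Function.not_injective_iff.mp hnot
    exact hf (by rw [det_zero_of_row_eq hne (by ext; simp [hab]), mul_zero])
  rw [det_mul_eq_sum_prod_mul_det_submatrix, ← sum_filter_of_ne hinjective,
    sum_injective_eq_sum_strictMono_sum_perm]
  refine sum_congr rfl fun g _ => ?_
  calc ∑ σ : Equiv.Perm (Fin k), (∏ i, M i ((g ∘ σ) i)) * (N.submatrix (g ∘ σ) id).det
      = ∑ σ : Equiv.Perm (Fin k), (Equiv.Perm.sign σ * ∏ i, (M.submatrix id g)ᵀ (σ i) i) *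
          (N.submatrix g id).det := by
        refine sum_congr rfl fun σ _ => ?_
        rw [show N.submatrix (g ∘ σ) id = (N.submatrix g id).submatrix σ id from rfl, det_permute]
        simp only [transpose_apply, submatrix_apply, Function.comp_apply, id]
        ring
    _ = (M.submatrix id g).det * (N.submatrix g id).det := by
        rw [← sum_mul, ← det_apply', det_transpose]

theorem Matrix.det_submatrix_mul_eq_sum_strictMono {l m : Type*} (A : Matrix l ι R)
    (B : Matrix ι m R) (r : Fin k → l) (c : Fin k → m) :
    ((A * B).submatrix r c).det =
      ∑ s : Fin k → ι with StrictMono s, (A.submatrix r s).det * (B.submatrix s c).det := by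
  rw [submatrix_mul A B r id c Function.bijective_id, det_mul_eq_sum_strictMono]
  simp only [submatrix_submatrix, Function.comp_id, Function.id_comp]

theorem Matrix.exists_strictMono_det_submatrix_ne_zero [Nontrivial R] {B : Matrix ι ι R}
    (hB : IsUnit B.det) {c : Fin k → ι} (hc : Function.Injective c) :
    ∃ s : Fin k → ι, StrictMono s ∧ (B.submatrix s c).det ≠ 0 := by
  by_contra! h
  have hminor : ((B⁻¹ * B).submatrix c c).det = 1 := by
    rw [nonsing_inv_mul B hB, submatrix_one c hc, det_one]
  rw [det_submatrix_mul_eq_sum_strictMono,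
    sum_eq_zero fun s hs => by rw [h s (mem_filter.1 hs).2, mul_zero]] at hminor
  exact zero_ne_one hminor

end CauchyBinet

theorem STP_mul_nonsingular_TP (n : ℕ) (A B : Matrix (Fin n) (Fin n) ℝ)
    (hA : ∀ (k : ℕ) (r c : Fin k → Fin n), StrictMono r → StrictMono c →
        0 < (A.submatrix r c).det)
    (hB : ∀ (k : ℕ) (r c : Fin k → Fin n), StrictMono r → StrictMono c →
        0 ≤ (B.submatrix r c).det)
    (hBns : B.det ≠ 0) :
    ∀ (k : ℕ) (r c : Fin k → Fin n), StrictMono r → StrictMono c →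
      0 < ((A * B).submatrix r c).det := by
  intro k r c hr hc
  obtain ⟨s, hs, hBs⟩ :=
    exists_strictMono_det_submatrix_ne_zero (isUnit_iff_ne_zero.mpr hBns) hc.injective
  rw [det_submatrix_mul_eq_sum_strictMono]
  refine sum_pos' (fun t ht => ?_) ⟨s, mem_filter.2 ⟨mem_univ s, hs⟩, ?_⟩
  · have ht : StrictMono t := (mem_filter.1 ht).2
    exact mul_nonneg (hA k r t hr ht).le (hB k t c ht hc)
  · exact mul_pos (hA k r s hr hs) ((hB k s c hs hc).lt_of_ne' hBs)
end
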